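/- Let X be a complete CAT(0) space, n ≥ 1, and φ : ℝⁿ → X an isometric embedding with image E (an n-flat); set x = φ(0). Let Y be the union of all n-flats of X parallel to E, and let Z = {y ∈ Y : d(y,x) ≤ d(y,e) for all e ∈ E}. Then: (a) Y is a closed convex subset of X containing E; (b) Z is closed and convex; (c) there is a bijection Φ : ℝⁿ × Z → Y such that Φ(v,x) = φ(v) for all v ∈ ℝⁿ, Φ(0,z) = z for all z ∈ Z, and d(Φ(v,z), Φ(v',z'))² = ‖v−v'‖² + d(z,z')² for all v,v' ∈ ℝⁿ and z,z' ∈ Z. -/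

import Mathlib

/-- `m` is a midpoint of `x` and `y`. -/
def IsMidpoint {X : Type*} [MetricSpace X] (x y m : X) : Prop :=
  dist x m = dist x y / 2 ∧ dist y m = dist x y / 2

/-- A complete metric space is CAT(0) if midpoints exist and the
Bruhat–Tits inequality holds. -/
def IsCAT0 (X : Type*) [MetricSpace X] : Prop :=
  (∀ x y : X, ∃ m : X, IsMidpoint x y m) ∧
  ∀ x y z m : X, IsMidpoint x y m →
    dist z m ^ 2 ≤ dist z x ^ 2 / 2 + dist z y ^ 2 / 2 - dist x y ^ 2 / 4

/-- A subset is convex if it contains every midpoint of any two of its points. -/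
def ConvexSubset {X : Type*} [MetricSpace X] (C : Set X) : Prop :=
  ∀ x ∈ C, ∀ y ∈ C, ∀ m : X, IsMidpoint x y m → m ∈ C

/-- An `n`-flat in `X`: the image of an isometric embedding of `ℝⁿ`. -/
def IsNFlat {X : Type*} [MetricSpace X] (n : ℕ) (F : Set X) : Prop :=
  ∃ ψ : EuclideanSpace ℝ (Fin n) → X, Isometry ψ ∧ Set.range ψ = F

/-- Two subsets `A`, `B` are parallel if the distance to `B` is constant on `A`
and the distance to `A` is constant on `B`. -/
def ParallelSets {X : Type*} [MetricSpace X] (A B : Set X) : Prop :=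
  (∃ c : ℝ, ∀ a ∈ A, Metric.infDist a B = c) ∧
  (∃ c : ℝ, ∀ b ∈ B, Metric.infDist b A = c)

/-!
For an isometry `f : V → X` of a Euclidean space into a CAT(0) space, the Bruhat–Tits inequality
and the parallelogram law make `s ↦ d(p, f s)² - d(w, s)²` midpoint convex. Consequently it is
constant as soon as it is bounded above, and if `f s₀` is a nearest point to `p` it is minimal
at `s₀`, i.e. `d(p, f s)² ≥ d(p, f s₀)² + d(s₀, s)²`.

A flat `ψ` parallel to `E = range φ` is reparametrized by the nearest-point maps between the two
flats; the quadrilateral inequality turns the lower bound above into the equality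
`d(f v, φ s)² = c² + d(v, s)²` (flat strip theorem). For two flats `f, g` so parametrized,
`d(f v, g u)² - d(v, u)²` is bounded, hence `d(f v, g u)² = d(f 0, g 0)² + d(v, u)²`. Then `Z` is
the set of base points `f 0` and `Φ (v, f 0) = f v`. The midpoints of `f w` and `g w` form again
such a flat, which gives convexity; a Cauchy sequence of base points gives pointwise convergent
flats, which gives closedness.
-/

open Set Filter Topology Metric

def MidpointConvex {E : Type*} [AddCommGroup E] [Module ℝ E] (h : E → ℝ) : Prop :=
  ∀ u v, h (midpoint ℝ u v) ≤ (h u + h v) / 2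

theorem nonpos_of_forall_two_pow_mul_le {a b : ℝ} (h : ∀ k : ℕ, 2 ^ k * a ≤ b) : a ≤ 0 := by
  by_contra! ha
  obtain ⟨k, hk⟩ := pow_unbounded_of_one_lt (b / a) one_lt_two
  rw [div_lt_iff₀ ha] at hk
  linarith [h k]

theorem CauchySeq.of_dist_le {α β : Type*} [PseudoMetricSpace α] [PseudoMetricSpace β]
    {a : ℕ → α} {b : ℕ → β} (hb : CauchySeq b) (h : ∀ k l, dist (a k) (a l) ≤ dist (b k) (b l)) :
    CauchySeq a :=
  Metric.cauchySeq_iff.2 fun ε hε => (Metric.cauchySeq_iff.1 hb ε hε).imp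
    fun _ hN k hk l hl => (h k l).trans_lt (hN k hk l hl)

namespace MidpointConvex

variable {E : Type*}

theorem two_pow_mul_sub_le [AddCommGroup E] [Module ℝ E] {h : E → ℝ} (hh : MidpointConvex h)
    (u x : E) (k : ℕ) : 2 ^ k * (h (u + x) - h u) ≤ h (u + (2 : ℝ) ^ k • x) - h u := by
  induction k with
  | zero => simp
  | succ k ih =>
    have hmid : midpoint ℝ u (u + (2 : ℝ) ^ (k + 1) • x) = u + (2 : ℝ) ^ k • x := by
      rw [midpoint_eq_smul_add, invOf_eq_inv, pow_succ]
      module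
    have := hh u (u + (2 : ℝ) ^ (k + 1) • x)
    rw [hmid] at this
    calc 2 ^ (k + 1) * (h (u + x) - h u) = 2 * (2 ^ k * (h (u + x) - h u)) := by ring
      _ ≤ _ := by linarith

theorem eq_of_forall_le [AddCommGroup E] [Module ℝ E] {h : E → ℝ} (hh : MidpointConvex h)
    {C : ℝ} (hC : ∀ u, h u ≤ C) (u v : E) : h u = h v := by
  have key : ∀ u v, h v ≤ h u := fun u v => by
    have := nonpos_of_forall_two_pow_mul_le (a := h v - h u) (b := C - h u) fun k => by
      have := hh.two_pow_mul_sub_le u (v - u) k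
      rw [add_sub_cancel] at this
      linarith [hC (u + (2 : ℝ) ^ k • (v - u))]
    linarith
  exact le_antisymm (key v u) (key u v)

theorem le_of_sub_dist_sq_le [NormedAddCommGroup E] [NormedSpace ℝ E] {h : E → ℝ}
    (hh : MidpointConvex h) {s₀ : E} (hlow : ∀ s, h s₀ - dist s₀ s ^ 2 ≤ h s) (s : E) :
    h s₀ ≤ h s := by
  refine sub_nonpos.1 (nonpos_of_forall_two_pow_mul_le (b := dist s₀ s ^ 2) fun k => ?_)
  set x := ((2 : ℝ) ^ k)⁻¹ • (s - s₀)
  have hx : (2 : ℝ) ^ k • x = s - s₀ := smul_inv_smul₀ (by positivity) _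
  have hconv := hh.two_pow_mul_sub_le s₀ x k
  rw [hx, add_sub_cancel] at hconv
  have hnear := hlow (s₀ + x)
  rw [dist_self_add_right] at hnear
  have hnorm : (2 : ℝ) ^ k * ‖x‖ = dist s₀ s := by
    rw [← Real.norm_of_nonneg (by positivity : (0 : ℝ) ≤ 2 ^ k), ← norm_smul, hx, dist_comm,
      dist_eq_norm]
  have hpos : (0 : ℝ) ≤ 2 ^ k := by positivity
  calc 2 ^ k * (h s₀ - h s) ≤ 2 ^ k * (2 ^ k * (h s₀ - h (s₀ + x))) := by gcongr; linarith
    _ ≤ 2 ^ k * (2 ^ k * ‖x‖ ^ 2) := by gcongr; linarith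
    _ = dist s₀ s ^ 2 := by rw [← hnorm]; ring

end MidpointConvex

section CAT0

variable {X : Type*} [MetricSpace X]

theorem IsMidpoint.symm {x y m : X} (h : IsMidpoint x y m) : IsMidpoint y x m :=
  ⟨by rw [h.2, dist_comm], by rw [h.1, dist_comm]⟩

theorem IsCAT0.bruhatTits (hX : IsCAT0 X) {x y m : X} (hm : IsMidpoint x y m) (z : X) :
    dist z m ^ 2 ≤ dist z x ^ 2 / 2 + dist z y ^ 2 / 2 - dist x y ^ 2 / 4 :=
  hX.2 x y z m hm

theorem IsCAT0.midpoint_unique (hX : IsCAT0 X) {x y m m' : X} (hm : IsMidpoint x y m)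
    (hm' : IsMidpoint x y m') : m = m' := by
  have h := hX.bruhatTits hm m'
  rw [dist_comm m' x, dist_comm m' y, hm'.1, hm'.2] at h
  exact dist_eq_zero.1 (by nlinarith [dist_nonneg (x := m') (y := m), dist_comm m m'])

theorem IsCAT0.dist_sq_add_dist_sq_le (hX : IsCAT0 X) (x y x' y' : X) :
    dist x y ^ 2 + dist x' y' ^ 2 ≤
      dist x x' ^ 2 + dist y y' ^ 2 + dist x y' ^ 2 + dist x' y ^ 2 := by
  obtain ⟨m, hm⟩ := hX.1 x y
  obtain ⟨m', hm'⟩ := hX.1 x' y'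
  have h₁ := hX.bruhatTits hm' m
  have h₂ := hX.bruhatTits hm x'
  have h₃ := hX.bruhatTits hm y'
  rw [dist_comm m x', dist_comm m y'] at h₁
  rw [dist_comm x' x] at h₂
  rw [dist_comm y' x, dist_comm y' y] at h₃
  nlinarith [sq_nonneg (dist m m')]

variable {V : Type*}

theorem infDist_range_eq {f : V → X} {p : X} {s₀ : V} (h : ∀ s, dist p (f s₀) ≤ dist p (f s)) :
    infDist p (range f) = dist p (f s₀) :=
  le_antisymm (infDist_le_dist_of_mem (mem_range_self s₀))
    ((le_infDist ⟨_, mem_range_self s₀⟩).2 (forall_mem_range.2 h))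

theorem Isometry.exists_forall_dist_le [MetricSpace V] [ProperSpace V] [Nonempty V] {f : V → X}
    (hf : Isometry f) (p : X) : ∃ s₀, ∀ s, dist p (f s₀) ≤ dist p (f s) := by
  obtain ⟨s₁⟩ := ‹Nonempty V›
  refine (continuous_const.dist hf.continuous).exists_forall_le ?_
  refine tendsto_atTop_mono (fun s => ?_)
    (tendsto_atTop_add_const_right _ (-dist p (f s₁)) (tendsto_dist_right_cocompact_atTop s₁))
  have := dist_triangle (f s) p (f s₁)
  rw [hf.dist_eq, dist_comm (f s)] at this
  linarith

theorem Isometry.isMidpoint [NormedAddCommGroup V] [NormedSpace ℝ V] {f : V → X}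
    (hf : Isometry f) (u v : V) :
    IsMidpoint (f u) (f v) (f (midpoint ℝ u v)) := by
  simp only [IsMidpoint, hf.dist_eq, dist_left_midpoint (𝕜 := ℝ), dist_right_midpoint (𝕜 := ℝ),
    Real.norm_two]
  constructor <;> ring

theorem dist_le_dist_of_dist_sq_eq [NormedAddCommGroup V] [NormedSpace ℝ V] {f : V → X}
    {x y : X} {v u : V} (hx : ∀ s, dist x (f s) ^ 2 = dist x (f v) ^ 2 + dist v s ^ 2)
    (hy : ∀ s, dist y (f s) ^ 2 = dist y (f u) ^ 2 + dist u s ^ 2) : dist v u ≤ dist x y := by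
  by_contra! hlt
  set r := dist v u
  set β := dist y (f u)
  have hr : 0 < r := lt_of_le_of_lt dist_nonneg hlt
  -- go far beyond `u` on the line from `v` through `u`
  set t := β ^ 2 / (2 * r * (r - dist x y)) + 1
  have ht : 0 < t := by positivity
  set s := u + t • (u - v)
  have hvs : dist v s = (1 + t) * r := by
    rw [dist_comm, dist_eq_norm, show s - v = (1 + t) • (u - v) by module, norm_smul,
      Real.norm_of_nonneg (by positivity), ← dist_eq_norm, dist_comm]
  have hus : dist u s = t * r := by
    rw [dist_comm, dist_eq_norm, show s - u = t • (u - v) by module, norm_smul,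
      Real.norm_of_nonneg ht.le, ← dist_eq_norm, dist_comm]
  have hxs : (1 + t) * r ≤ dist x (f s) := by
    rw [← hvs]
    nlinarith [hx s, dist_nonneg (x := v) (y := s), dist_nonneg (x := x) (y := f s)]
  have hys : dist y (f s) ^ 2 = β ^ 2 + (t * r) ^ 2 := by rw [hy s, hus]
  have htri := dist_triangle x y (f s)
  have hkey : 2 * t * r * (r - dist x y) = β ^ 2 + 2 * r * (r - dist x y) := by
    simp only [t]; field_simp
  have hfar : t * r + (r - dist x y) ≤ dist y (f s) := by linarith
  nlinarith [pow_le_pow_left₀ (by positivity) hfar 2]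

end CAT0

section Flats

variable {X : Type*} [MetricSpace X] {V : Type*} [NormedAddCommGroup V] [InnerProductSpace ℝ V]

theorem IsCAT0.midpointConvex_dist_sq_sub (hX : IsCAT0 X) {f : V → X} (hf : Isometry f)
    (p : X) (w : V) : MidpointConvex fun s => dist p (f s) ^ 2 - dist w s ^ 2 := by
  intro u v
  have hBT := hX.bruhatTits (hf.isMidpoint u v) p
  have hApollonius :=
    EuclideanGeometry.dist_sq_add_dist_sq_eq_two_mul_dist_midpoint_sq_add_half_dist_sq w u v
  rw [hf.dist_eq] at hBT
  linarith

theorem IsCAT0.dist_sq_eq_of_le (hX : IsCAT0 X) {f : V → X} (hf : Isometry f) {p : X} {w : V}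
    {C : ℝ} (hC : ∀ s, dist p (f s) ^ 2 ≤ C + dist w s ^ 2) (s : V) :
    dist p (f s) ^ 2 = dist p (f w) ^ 2 + dist w s ^ 2 := by
  have := (hX.midpointConvex_dist_sq_sub hf p w).eq_of_forall_le (C := C)
    (fun s => by linarith [hC s]) s w
  simp only [dist_self] at this
  linarith

theorem IsCAT0.dist_sq_eq_of_le₂ (hX : IsCAT0 X) {f g : V → X} (hf : Isometry f)
    (hg : Isometry g) {C : ℝ} (hC : ∀ v u, dist (f v) (g u) ^ 2 ≤ C + dist v u ^ 2) (v u : V) :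
    dist (f v) (g u) ^ 2 = dist (f 0) (g 0) ^ 2 + dist v u ^ 2 := by
  have hg' := fun v => hX.dist_sq_eq_of_le hg (hC v)
  have hf' := fun u => hX.dist_sq_eq_of_le hf (C := C) (p := g u) (w := u)
    (fun v => by rw [dist_comm, dist_comm u]; exact hC v u)
  have hdiag : ∀ v, dist (f v) (g v) ^ 2 = dist (f 0) (g 0) ^ 2 := fun v => by
    have h₁ := hg' v 0
    have h₂ := hf' 0 v
    rw [dist_comm (g 0), dist_comm 0 v, dist_comm (g 0)] at h₂
    linarith
  rw [hg' v u, hdiag]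

theorem IsCAT0.exists_foot [ProperSpace V] (hX : IsCAT0 X) {f : V → X} (hf : Isometry f)
    (p : X) : ∃ s₀, dist p (f s₀) = infDist p (range f) ∧
      ∀ s, dist p (f s₀) ^ 2 + dist s₀ s ^ 2 ≤ dist p (f s) ^ 2 := by
  obtain ⟨s₀, hs₀⟩ := hf.exists_forall_dist_le p
  refine ⟨s₀, (infDist_range_eq hs₀).symm, fun s => ?_⟩
  have hmin := (hX.midpointConvex_dist_sq_sub hf p s₀).le_of_sub_dist_sq_le (s₀ := s₀)
    (fun s => by
      have := pow_le_pow_left₀ dist_nonneg (hs₀ s) 2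
      simp only [dist_self]
      linarith) s
  simp only [dist_self] at hmin
  linarith

end Flats

section AlignedFlat

variable {X : Type*} [MetricSpace X] {V : Type*} [NormedAddCommGroup V] {φ f g : V → X}

/-- `f` parametrizes a flat parallel to `range φ` so that `φ v` is the foot of `f v`. -/
structure IsAlignedFlat (φ f : V → X) : Prop where
  isometry : Isometry f
  dist_sq : ∀ v s, dist (f v) (φ s) ^ 2 = dist (f 0) (φ 0) ^ 2 + dist v s ^ 2

theorem isAlignedFlat_self (hφ : Isometry φ) : IsAlignedFlat φ φ :=
  ⟨hφ, fun v s => by simp [hφ.dist_eq]⟩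

namespace IsAlignedFlat

theorem dist_apply_eq (hf : IsAlignedFlat φ f) (v : V) : dist (f v) (φ v) = dist (f 0) (φ 0) :=
  (pow_left_inj₀ dist_nonneg dist_nonneg two_ne_zero).1 (by simpa using hf.dist_sq v v)

theorem dist_zero_le (hf : IsAlignedFlat φ f) (v s : V) :
    dist (f 0) (φ 0) ≤ dist (f v) (φ s) :=
  le_of_sq_le_sq (by nlinarith [hf.dist_sq v s]) dist_nonneg

theorem parallelSets (hf : IsAlignedFlat φ f) : ParallelSets (range f) (range φ) := by
  refine ⟨⟨dist (f 0) (φ 0), forall_mem_range.2 fun v => ?_⟩,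
    ⟨dist (f 0) (φ 0), forall_mem_range.2 fun s => ?_⟩⟩
  · rw [infDist_range_eq fun s => (hf.dist_apply_eq v).trans_le (hf.dist_zero_le v s),
      hf.dist_apply_eq]
  · rw [infDist_range_eq (f := f) (s₀ := s) fun v => ?_, dist_comm, hf.dist_apply_eq]
    rw [dist_comm, dist_comm (φ s), hf.dist_apply_eq]
    exact hf.dist_zero_le v s

variable [InnerProductSpace ℝ V]

theorem dist_sq_eq (hX : IsCAT0 X) (hf : IsAlignedFlat φ f) (hg : IsAlignedFlat φ g) (v u : V) :
    dist (f v) (g u) ^ 2 = dist (f 0) (g 0) ^ 2 + dist v u ^ 2 := by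
  refine hX.dist_sq_eq_of_le₂ hf.isometry hg.isometry
    (C := 2 * dist (f 0) (φ 0) ^ 2 + 2 * dist (g 0) (φ 0) ^ 2) (fun v u => ?_) v u
  -- pass through `φ` over the midpoint of `v` and `u`
  have hv := hf.dist_sq v (midpoint ℝ v u)
  have hu := hg.dist_sq u (midpoint ℝ v u)
  rw [dist_left_midpoint (𝕜 := ℝ), Real.norm_two] at hv
  rw [dist_right_midpoint (𝕜 := ℝ), Real.norm_two] at hu
  have htri := dist_triangle_right (f v) (g u) (φ (midpoint ℝ v u))
  nlinarith [sq_nonneg (dist (f v) (φ (midpoint ℝ v u)) - dist (g u) (φ (midpoint ℝ v u))),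
    pow_le_pow_left₀ dist_nonneg htri 2]

theorem dist_eq (hX : IsCAT0 X) (hf : IsAlignedFlat φ f) (hg : IsAlignedFlat φ g) (v : V) :
    dist (f v) (g v) = dist (f 0) (g 0) :=
  (pow_left_inj₀ dist_nonneg dist_nonneg two_ne_zero).1 (by simpa using hf.dist_sq_eq hX hg v v)

theorem eq_of_apply_zero_eq (hX : IsCAT0 X) (hf : IsAlignedFlat φ f) (hg : IsAlignedFlat φ g)
    (h : f 0 = g 0) : f = g :=
  funext fun v => dist_eq_zero.1 (by rw [hf.dist_eq hX hg, h, dist_self])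

end IsAlignedFlat

end AlignedFlat

section FlatStrip

variable {X : Type*} [MetricSpace X] {V : Type*}

def IsFootMap [MetricSpace V] (ψ φ : V → X) (T : V → V) (c : ℝ) : Prop :=
  ∀ v, dist (ψ v) (φ (T v)) = c ∧ ∀ s, c ^ 2 + dist (T v) s ^ 2 ≤ dist (ψ v) (φ s) ^ 2

theorem IsCAT0.exists_isFootMap [NormedAddCommGroup V] [InnerProductSpace ℝ V] [ProperSpace V]
    (hX : IsCAT0 X) {ψ φ : V → X} (hφ : Isometry φ) {c : ℝ}
    (hc : ∀ v, infDist (ψ v) (range φ) = c) : ∃ T, IsFootMap ψ φ T c := by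
  choose T hT hT' using fun v => hX.exists_foot hφ (ψ v)
  exact ⟨T, fun v => ⟨(hT v).trans (hc v), fun s => by rw [← hc v, ← hT v]; exact hT' v s⟩⟩

namespace IsFootMap

variable [MetricSpace V] {ψ φ : V → X} {T S : V → V} {c c' : ℝ}

theorem sq_add_dist_sq_le (hT : IsFootMap ψ φ T c) (hS : IsFootMap φ ψ S c') (v : V) :
    c' ^ 2 + dist (S (T v)) v ^ 2 ≤ c ^ 2 := by
  have := (hS (T v)).2 v
  rwa [dist_comm (φ _), (hT v).1] at this

theorem dist_sq_eq (hX : IsCAT0 X) (hψ : Isometry ψ) (hφ : Isometry φ)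
    (hT : IsFootMap ψ φ T c) (hS : IsFootMap φ ψ S c) (hTS : ∀ s, T (S s) = s) (s v : V) :
    dist (φ s) (ψ v) ^ 2 = c ^ 2 + dist (S s) v ^ 2 := by
  have hquad := hX.dist_sq_add_dist_sq_le (φ s) (ψ v) (φ (T v)) (ψ (S s))
  have hfoot := (hT (S s)).2 (T v)
  rw [hTS] at hfoot
  rw [hφ.dist_eq, hψ.dist_eq, (hS s).1, dist_comm (φ (T v)) (ψ (S s)),
    dist_comm (φ (T v)) (ψ v), (hT v).1, dist_comm v] at hquad
  linarith [(hS s).2 v]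

end IsFootMap

theorem IsCAT0.exists_isAlignedFlat_range_eq [NormedAddCommGroup V] [InnerProductSpace ℝ V]
    [ProperSpace V] (hX : IsCAT0 X) {ψ φ : V → X} (hψ : Isometry ψ) (hφ : Isometry φ)
    (hpar : ParallelSets (range ψ) (range φ)) : ∃ f, IsAlignedFlat φ f ∧ range f = range ψ := by
  obtain ⟨⟨c, hc⟩, ⟨c', hc'⟩⟩ := hpar
  obtain ⟨T, hT⟩ := hX.exists_isFootMap hφ fun v => hc _ (mem_range_self v)
  obtain ⟨S, hS⟩ := hX.exists_isFootMap hψ fun s => hc' _ (mem_range_self s)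
  have hST_le := hT.sq_add_dist_sq_le hS
  have hTS_le := hS.sq_add_dist_sq_le hT
  have hcc' : c' = c := by
    have hc₀ : 0 ≤ c := hc _ (mem_range_self 0) ▸ infDist_nonneg
    have hc₀' : 0 ≤ c' := hc' _ (mem_range_self 0) ▸ infDist_nonneg
    exact (pow_left_inj₀ hc₀' hc₀ two_ne_zero).1 (by nlinarith [hST_le 0, hTS_le 0])
  subst c'
  have hTS : ∀ s, T (S s) = s := fun s => dist_eq_zero.1 (by nlinarith [hTS_le s])
  have hST : ∀ v, S (T v) = v := fun v => dist_eq_zero.1 (by nlinarith [hST_le v])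
  have hφψ := hT.dist_sq_eq hX hψ hφ hS hTS
  have hψφ := hS.dist_sq_eq hX hφ hψ hT hST
  have hS_iso : Isometry S := Isometry.of_dist_eq fun s s' => by
    have := hφψ s (S s')
    rw [dist_comm, hψφ, hTS, dist_comm s'] at this
    exact (pow_left_inj₀ dist_nonneg dist_nonneg two_ne_zero).1 (by linarith)
  refine ⟨ψ ∘ S, ⟨hψ.comp hS_iso, fun v s => ?_⟩,
    Function.Surjective.range_comp (fun v => ⟨T v, hST v⟩) ψ⟩
  simp only [Function.comp_apply]
  rw [dist_comm, hφψ, dist_comm (ψ (S 0)), hφψ, hS_iso.dist_eq, hS_iso.dist_eq, dist_self,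
    dist_comm s]
  ring

end FlatStrip

namespace IsAlignedFlat

variable {X : Type*} [MetricSpace X] {V : Type*} [NormedAddCommGroup V] [InnerProductSpace ℝ V]
  {φ f g : V → X}

theorem dist_sq_of_isMidpoint (hX : IsCAT0 X) (hf : IsAlignedFlat φ f) (hg : IsAlignedFlat φ g)
    {w : V} {m : X} (hm : IsMidpoint (f w) (g w) m) (u : V) :
    dist m (f u) ^ 2 = dist (f 0) (g 0) ^ 2 / 4 + dist w u ^ 2 := by
  have hfg := hf.dist_eq hX hg w
  rw [hX.dist_sq_eq_of_le hf.isometry (C := dist (f 0) (g 0) ^ 2 / 4) (fun u => ?_), dist_comm,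
    hm.1, hfg]
  · ring
  have hBT := hX.bruhatTits hm (f u)
  rw [hf.isometry.dist_eq, hfg, hf.dist_sq_eq hX hg, dist_comm (f u), dist_comm u] at hBT
  linarith

theorem of_isMidpoint (hX : IsCAT0 X) (hφ : Isometry φ) (hf : IsAlignedFlat φ f)
    (hg : IsAlignedFlat φ g) {M : V → X} (hM : ∀ w, IsMidpoint (f w) (g w) (M w)) :
    IsAlignedFlat φ M := by
  have hMf := fun w => hf.dist_sq_of_isMidpoint hX hg (hM w)
  have hMg := fun w => hg.dist_sq_of_isMidpoint hX hf (hM w).symm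
  rw [dist_comm (g 0)] at hMg
  have hMφ : ∀ w s, dist (M w) (φ s) ^ 2 ≤
      (dist (f 0) (φ 0) ^ 2 + dist (g 0) (φ 0) ^ 2) / 2 + dist w s ^ 2 := fun w s => by
    have hBT := hX.bruhatTits (hM w) (φ s)
    rw [dist_comm (φ s), dist_comm (φ s), dist_comm (φ s), hf.dist_sq, hg.dist_sq] at hBT
    linarith [sq_nonneg (dist (f w) (g w))]
  have hiso : Isometry M := Isometry.of_dist_eq fun v u => by
    refine le_antisymm ((pow_le_pow_iff_left₀ dist_nonneg dist_nonneg two_ne_zero).1 ?_)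
      (dist_le_dist_of_dist_sq_eq (hX.dist_sq_eq_of_le hφ (hMφ v))
        (hX.dist_sq_eq_of_le hφ (hMφ u)))
    have hBT := hX.bruhatTits (hM u) (M v)
    rw [hMf, hMg, hf.dist_eq hX hg u] at hBT
    linarith
  exact ⟨hiso, hX.dist_sq_eq_of_le₂ hiso hφ hMφ⟩

theorem exists_isMidpoint_eq (hX : IsCAT0 X) (hφ : Isometry φ) (hf : IsAlignedFlat φ f)
    (hg : IsAlignedFlat φ g) : ∃ h, IsAlignedFlat φ h ∧
      ∀ v u m, IsMidpoint (f v) (g u) m → m = h (midpoint ℝ v u) := by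
  choose M hM using fun w => hX.1 (f w) (g w)
  refine ⟨M, of_isMidpoint hX hφ hf hg hM, fun v u m hm => hX.midpoint_unique hm ⟨?_, ?_⟩⟩
  all_goals
    refine (pow_left_inj₀ dist_nonneg (by positivity) two_ne_zero).1 ?_
    rw [div_pow, hf.dist_sq_eq hX hg, dist_comm]
  · rw [hf.dist_sq_of_isMidpoint hX hg (hM _), dist_midpoint_left (𝕜 := ℝ), Real.norm_two]
    ring
  · rw [hg.dist_sq_of_isMidpoint hX hf (hM _).symm, dist_midpoint_right (𝕜 := ℝ), Real.norm_two,
      dist_comm (g 0)]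
    ring

end IsAlignedFlat

section ParallelSet

variable {X : Type*} [MetricSpace X] {V : Type*} [NormedAddCommGroup V] [InnerProductSpace ℝ V]
  {φ : V → X}

theorem IsAlignedFlat.exists_tendsto [CompleteSpace X] (hX : IsCAT0 X) {f : ℕ → V → X}
    (hf : ∀ k, IsAlignedFlat φ (f k)) (hc : CauchySeq fun k => f k 0) :
    ∃ g, IsAlignedFlat φ g ∧ Tendsto (fun k => f k 0) atTop (𝓝 (g 0)) := by
  choose g hg using fun u => cauchySeq_tendsto_of_complete
    (hc.of_dist_le fun k l => ((hf k).dist_eq hX (hf l) u).le)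
  have hiso : Isometry g := Isometry.of_dist_eq fun u u' =>
    tendsto_nhds_unique ((hg u).dist (hg u')) (by
      simp_rw [(hf _).isometry.dist_eq]
      exact tendsto_const_nhds)
  refine ⟨g, ⟨hiso, fun u s => tendsto_nhds_unique (((hg u).dist tendsto_const_nhds).pow 2) ?_⟩,
    hg 0⟩
  simp_rw [(hf _).dist_sq u s]
  exact (((hg 0).dist tendsto_const_nhds).pow 2).add_const _

def parallelSet (φ : V → X) : Set X :=
  {y | ∃ ψ : V → X, Isometry ψ ∧ ParallelSets (range ψ) (range φ) ∧ y ∈ range ψ}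

def crossSection (φ : V → X) : Set X :=
  {y | y ∈ parallelSet φ ∧ ∀ e ∈ range φ, dist y (φ 0) ≤ dist y e}

omit [InnerProductSpace ℝ V] in
theorem range_subset_parallelSet (hφ : Isometry φ) : range φ ⊆ parallelSet φ :=
  fun _ hy => ⟨φ, hφ, (isAlignedFlat_self hφ).parallelSets, hy⟩

variable [ProperSpace V]

theorem mem_parallelSet_iff (hX : IsCAT0 X) (hφ : Isometry φ) {y : X} :
    y ∈ parallelSet φ ↔ ∃ f, IsAlignedFlat φ f ∧ y ∈ range f := by
  constructor
  · rintro ⟨ψ, hψ, hpar, hy⟩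
    obtain ⟨f, hf, hfψ⟩ := hX.exists_isAlignedFlat_range_eq hψ hφ hpar
    exact ⟨f, hf, hfψ ▸ hy⟩
  · rintro ⟨f, hf, hy⟩
    exact ⟨f, hf.isometry, hf.parallelSets, hy⟩

theorem mem_crossSection_iff (hX : IsCAT0 X) (hφ : Isometry φ) {z : X} :
    z ∈ crossSection φ ↔ ∃ f, IsAlignedFlat φ f ∧ f 0 = z := by
  simp only [crossSection, mem_ofPred_eq, mem_parallelSet_iff hX hφ, forall_mem_range]
  constructor
  · rintro ⟨⟨f, hf, v, rfl⟩, hmin⟩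
    have h₀ := hf.dist_sq v 0
    have h₁ := hf.dist_sq v v
    rw [dist_self] at h₁
    have hv : dist v 0 = 0 := by
      nlinarith [pow_le_pow_left₀ dist_nonneg (hmin v) 2, dist_nonneg (x := v) (y := 0)]
    rw [dist_eq_zero.1 hv]
    exact ⟨f, hf, rfl⟩
  · rintro ⟨f, hf, rfl⟩
    exact ⟨⟨f, hf, mem_range_self 0⟩, hf.dist_zero_le 0⟩

theorem isClosed_parallelSet [CompleteSpace X] (hX : IsCAT0 X) (hφ : Isometry φ) :
    IsClosed (parallelSet φ) := by
  refine IsSeqClosed.isClosed fun y y' hy hlim => ?_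
  simp only [mem_parallelSet_iff hX hφ] at hy ⊢
  choose f hf v hv using hy
  have hdist := fun k l => (hf k).dist_sq_eq hX (hf l) (v k) (v l)
  simp only [hv] at hdist
  have hcy := hlim.cauchySeq
  obtain ⟨g, hg, hg0⟩ := IsAlignedFlat.exists_tendsto hX hf (hcy.of_dist_le fun k l =>
    (pow_le_pow_iff_left₀ dist_nonneg dist_nonneg two_ne_zero).1
      (by nlinarith [hdist k l, sq_nonneg (dist (v k) (v l))]))
  obtain ⟨v', hv'⟩ := cauchySeq_tendsto_of_complete (hcy.of_dist_le (a := v) fun k l =>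
    (pow_le_pow_iff_left₀ dist_nonneg dist_nonneg two_ne_zero).1
      (by nlinarith [hdist k l, sq_nonneg (dist (f k 0) (f l 0))]))
  refine ⟨g, hg, v', tendsto_nhds_unique ?_ hlim⟩
  rw [tendsto_iff_dist_tendsto_zero] at hg0 hv' ⊢
  refine squeeze_zero (fun _ => dist_nonneg) (fun k => ?_) (by simpa using hg0.add hv')
  rw [← hv, (pow_le_pow_iff_left₀ dist_nonneg (by positivity) two_ne_zero).symm,
    (hf k).dist_sq_eq hX hg]
  nlinarith [dist_nonneg (x := f k 0) (y := g 0), dist_nonneg (x := v k) (y := v')]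

theorem isClosed_crossSection [CompleteSpace X] (hX : IsCAT0 X) (hφ : Isometry φ) :
    IsClosed (crossSection φ) := by
  have : crossSection φ = parallelSet φ ∩ ⋂ s, {y | dist y (φ 0) ≤ dist y (φ s)} := by
    ext
    simp [crossSection]
  rw [this]
  exact (isClosed_parallelSet hX hφ).inter
    (isClosed_iInter fun s => isClosed_le (by fun_prop) (by fun_prop))

theorem convexSubset_parallelSet (hX : IsCAT0 X) (hφ : Isometry φ) :
    ConvexSubset (parallelSet φ) := by
  simp only [ConvexSubset, mem_parallelSet_iff hX hφ]
  rintro _ ⟨f, hf, v, rfl⟩ _ ⟨g, hg, u, rfl⟩ m hm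
  obtain ⟨h, hh, hmid⟩ := hf.exists_isMidpoint_eq hX hφ hg
  exact ⟨h, hh, _, (hmid v u m hm).symm⟩

theorem convexSubset_crossSection (hX : IsCAT0 X) (hφ : Isometry φ) :
    ConvexSubset (crossSection φ) := by
  simp only [ConvexSubset, mem_crossSection_iff hX hφ]
  rintro _ ⟨f, hf, rfl⟩ _ ⟨g, hg, rfl⟩ m hm
  obtain ⟨h, hh, hmid⟩ := hf.exists_isMidpoint_eq hX hφ hg
  exact ⟨h, hh, by rw [hmid 0 0 m hm, midpoint_self]⟩

end ParallelSet

section Decomposition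

variable {X : Type*} [MetricSpace X] {V : Type*} [NormedAddCommGroup V] [InnerProductSpace ℝ V]
  {φ : V → X}

open Classical in
noncomputable def alignedFlatThrough (φ : V → X) (z : X) : V → X :=
  if h : ∃ f, IsAlignedFlat φ f ∧ f 0 = z then h.choose else fun _ => z

theorem IsAlignedFlat.alignedFlatThrough_eq (hX : IsCAT0 X) {f : V → X}
    (hf : IsAlignedFlat φ f) : alignedFlatThrough φ (f 0) = f := by
  have h : ∃ g, IsAlignedFlat φ g ∧ g 0 = f 0 := ⟨f, hf, rfl⟩
  rw [alignedFlatThrough, dif_pos h]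
  exact h.choose_spec.1.eq_of_apply_zero_eq hX hf h.choose_spec.2

variable [ProperSpace V]

theorem isAlignedFlat_alignedFlatThrough (hX : IsCAT0 X) (hφ : Isometry φ) {z : X}
    (hz : z ∈ crossSection φ) :
    IsAlignedFlat φ (alignedFlatThrough φ z) ∧ alignedFlatThrough φ z 0 = z := by
  obtain ⟨f, hf, rfl⟩ := (mem_crossSection_iff hX hφ).1 hz
  rw [hf.alignedFlatThrough_eq hX]
  exact ⟨hf, rfl⟩

theorem existsUnique_alignedFlatThrough_eq (hX : IsCAT0 X) (hφ : Isometry φ) {y : X}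
    (hy : y ∈ parallelSet φ) :
    ∃! p : V × X, p.2 ∈ crossSection φ ∧ alignedFlatThrough φ p.2 p.1 = y := by
  obtain ⟨f, hf, v, rfl⟩ := (mem_parallelSet_iff hX hφ).1 hy
  refine ⟨(v, f 0), ⟨(mem_crossSection_iff hX hφ).2 ⟨f, hf, rfl⟩, by
    rw [hf.alignedFlatThrough_eq hX]⟩, ?_⟩
  rintro ⟨u, z⟩ ⟨hz, hu⟩
  obtain ⟨g, hg, rfl⟩ := (mem_crossSection_iff hX hφ).1 hz
  rw [hg.alignedFlatThrough_eq hX] at hu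
  have h := hg.dist_sq_eq hX hf u v
  rw [hu, dist_self] at h
  have hu₀ : dist u v = 0 := by nlinarith [dist_nonneg (x := u) (y := v)]
  have hz₀ : dist (g 0) (f 0) = 0 := by nlinarith [dist_nonneg (x := g 0) (y := f 0)]
  exact Prod.ext (dist_eq_zero.1 hu₀) (dist_eq_zero.1 hz₀)

end Decomposition

theorem stmt8_general {X : Type*} [MetricSpace X] [CompleteSpace X] (hX : IsCAT0 X)
    {n : ℕ}
    (φ : EuclideanSpace ℝ (Fin n) → X) (hφ : Isometry φ)
    (x : X) (hx : x = φ 0)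
    -- `Y` is the union of all `n`-flats parallel to `E = range φ`
    (Y : Set X)
    (hY : Y = {y | ∃ F : Set X, IsNFlat n F ∧ ParallelSets F (Set.range φ) ∧ y ∈ F})
    -- `Z = {y ∈ Y : d(y,x) ≤ d(y,e) for all e ∈ E}`
    (Z : Set X)
    (hZ : Z = {y | y ∈ Y ∧ ∀ e ∈ Set.range φ, dist y x ≤ dist y e}) :
    -- (a)
    IsClosed Y ∧ ConvexSubset Y ∧ Set.range φ ⊆ Y ∧
    -- (b)
    IsClosed Z ∧ ConvexSubset Z ∧
    -- (c) the product decomposition `Y ≅ ℝⁿ × Z`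
    ∃ Φ : EuclideanSpace ℝ (Fin n) → X → X,
      (∀ v : EuclideanSpace ℝ (Fin n), ∀ z ∈ Z, Φ v z ∈ Y) ∧
      (∀ y ∈ Y, ∃! p : EuclideanSpace ℝ (Fin n) × X, p.2 ∈ Z ∧ Φ p.1 p.2 = y) ∧
      (∀ v : EuclideanSpace ℝ (Fin n), Φ v x = φ v) ∧
      (∀ z ∈ Z, Φ 0 z = z) ∧
      (∀ v v' : EuclideanSpace ℝ (Fin n), ∀ z ∈ Z, ∀ z' ∈ Z,
        dist (Φ v z) (Φ v' z') ^ 2 = ‖v - v'‖ ^ 2 + dist z z' ^ 2) := by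
  have hY' : Y = parallelSet φ := by
    rw [hY]
    ext y
    simp [parallelSet, IsNFlat]
  subst hx hY' hZ
  refine ⟨isClosed_parallelSet hX hφ, convexSubset_parallelSet hX hφ, range_subset_parallelSet hφ,
    isClosed_crossSection hX hφ, convexSubset_crossSection hX hφ,
    fun v z => alignedFlatThrough φ z v, fun v z hz => ?_,
    fun y hy => existsUnique_alignedFlatThrough_eq hX hφ hy, fun v => ?_,
    fun z hz => (isAlignedFlat_alignedFlatThrough hX hφ hz).2, fun v v' z hz z' hz' => ?_⟩
  · exact (mem_parallelSet_iff hX hφ).2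
      ⟨_, (isAlignedFlat_alignedFlatThrough hX hφ hz).1, mem_range_self v⟩
  · exact congrFun ((isAlignedFlat_self hφ).alignedFlatThrough_eq hX) v
  · obtain ⟨hf, hf0⟩ := isAlignedFlat_alignedFlatThrough hX hφ hz
    obtain ⟨hg, hg0⟩ := isAlignedFlat_alignedFlatThrough hX hφ hz'
    rw [hf.dist_sq_eq hX hg, hf0, hg0, dist_eq_norm]
    ring

theorem stmt8 {X : Type*} [MetricSpace X] [CompleteSpace X] (hX : IsCAT0 X)
    {n : ℕ} (hn : 1 ≤ n)
    (φ : EuclideanSpace ℝ (Fin n) → X) (hφ : Isometry φ)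
    (x : X) (hx : x = φ 0)
    -- `Y` is the union of all `n`-flats parallel to `E = range φ`
    (Y : Set X)
    (hY : Y = {y | ∃ F : Set X, IsNFlat n F ∧ ParallelSets F (Set.range φ) ∧ y ∈ F})
    -- `Z = {y ∈ Y : d(y,x) ≤ d(y,e) for all e ∈ E}`
    (Z : Set X)
    (hZ : Z = {y | y ∈ Y ∧ ∀ e ∈ Set.range φ, dist y x ≤ dist y e}) :
    -- (a)
    IsClosed Y ∧ ConvexSubset Y ∧ Set.range φ ⊆ Y ∧
    -- (b)
    IsClosed Z ∧ ConvexSubset Z ∧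
    -- (c) the product decomposition `Y ≅ ℝⁿ × Z`
    ∃ Φ : EuclideanSpace ℝ (Fin n) → X → X,
      (∀ v : EuclideanSpace ℝ (Fin n), ∀ z ∈ Z, Φ v z ∈ Y) ∧
      (∀ y ∈ Y, ∃! p : EuclideanSpace ℝ (Fin n) × X, p.2 ∈ Z ∧ Φ p.1 p.2 = y) ∧
      (∀ v : EuclideanSpace ℝ (Fin n), Φ v x = φ v) ∧
      (∀ z ∈ Z, Φ 0 z = z) ∧
      (∀ v v' : EuclideanSpace ℝ (Fin n), ∀ z ∈ Z, ∀ z' ∈ Z,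
        dist (Φ v z) (Φ v' z') ^ 2 = ‖v - v'‖ ^ 2 + dist z z' ^ 2) :=
  stmt8_general hX φ hφ x hx Y hY Z hZ
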